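/- arXiv:2504.11660 — 2 statements merged into one kernel-verified Lean document; each statement's English description precedes it below -/
import Mathlib

section
/- Let E ⊆ ℝ^d be bounded and let p : E → ℝ^n be a map such that p(E) is bounded and, for every δ ∈ (0,1) and every ξ ∈ ℝ^n, the preimage p⁻¹(B(ξ,δ)) ∩ E can be covered by at most M(δ) balls of radius δ, where for every ε > 0 there is a constant C_ε with M(δ) ≤ C_ε δ^{-ε}. Then the upper box dimension of E is at most the upper box dimension of p(E). -/
/-!
Cover `p(E)` by `N(p(E), δ)` balls of radius `δ` and each piece `p⁻¹(B(ξ, δ)) ∩ E` by `M(δ)`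
balls: this gives `N(E, δ) ≤ M(δ) N(p(E), δ)`, and `log M(δ) / log(1/δ) → 0` because
`M(δ) ≤ C_ε δ^(-ε)` for every `ε`, so the extra factor disappears in the limsup. A grid in `ℝⁿ`
gives `N(p(E), δ) = O(δ^(-n))`; this bounds `log N(p(E), δ) / log(1/δ)` above, without which
the real-valued `limsup` defining `ubdim (p '' E)` would be the junk value `0`.
-/

open Filter Set Metric Bornology

/-- Minimal number of δ-balls needed to cover `E`. -/
noncomputable def coveringNumber {X : Type*} [PseudoMetricSpace X] (E : Set X) (δ : ℝ) : ℕ :=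
  sInf {n : ℕ | ∃ s : Finset X, s.card = n ∧ E ⊆ ⋃ x ∈ s, Metric.ball x δ}

/-- Upper box dimension: limsup of log N(E,δ) / (-log δ) as δ → 0⁺. -/
noncomputable def ubdim {X : Type*} [PseudoMetricSpace X] (E : Set X) : ℝ :=
  Filter.limsup (fun δ : ℝ => Real.log (coveringNumber E δ) / (-Real.log δ))
    (nhdsWithin 0 (Set.Ioi 0))

/-- Packing dimension via countable covers by bounded sets. -/
noncomputable def pdim {X : Type*} [PseudoMetricSpace X] (E : Set X) : ℝ :=
  sInf {a : ℝ | ∃ C : ℕ → Set X, (E ⊆ ⋃ i, C i) ∧ (∀ i, IsBounded (C i)) ∧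
    ∀ i, ubdim (C i) ≤ a}

open Topology

section CoveringNumber

variable {X Y : Type*} [PseudoMetricSpace X] [PseudoMetricSpace Y] {E : Set X} {δ : ℝ}

lemma coveringNumber_le_card {s : Finset X} (h : E ⊆ ⋃ x ∈ s, ball x δ) :
    coveringNumber E δ ≤ s.card :=
  Nat.sInf_le ⟨s, rfl, h⟩

lemma exists_finset_card_eq_coveringNumber (h : ∃ s : Finset X, E ⊆ ⋃ x ∈ s, ball x δ) :
    ∃ s : Finset X, s.card = coveringNumber E δ ∧ E ⊆ ⋃ x ∈ s, ball x δ := by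
  obtain ⟨s, hs⟩ := h
  exact Nat.sInf_mem (s := {n | ∃ s : Finset X, s.card = n ∧ E ⊆ ⋃ x ∈ s, ball x δ})
    ⟨s.card, s, rfl, hs⟩

lemma one_le_coveringNumber (hE : E.Nonempty) (h : ∃ s : Finset X, E ⊆ ⋃ x ∈ s, ball x δ) :
    1 ≤ coveringNumber E δ := by
  obtain ⟨s, hs, hcov⟩ := exists_finset_card_eq_coveringNumber h
  obtain ⟨x, hx, -⟩ := mem_iUnion₂.mp (hcov hE.some_mem)
  exact hs ▸ Finset.card_pos.mpr ⟨x, hx⟩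

lemma ubdim_empty : ubdim (∅ : Set X) = 0 := by
  have h (δ : ℝ) : coveringNumber (∅ : Set X) δ = 0 :=
    Nat.eq_zero_of_le_zero (coveringNumber_le_card (s := ∅) (empty_subset _))
  simp [ubdim, h]

lemma exists_cover_card_le_mul {p : X → Y} {m : ℕ} {t : Finset Y}
    (ht : p '' E ⊆ ⋃ ξ ∈ t, ball ξ δ)
    (hcov : ∀ ξ, ∃ s : Finset X, s.card ≤ m ∧ p ⁻¹' ball ξ δ ∩ E ⊆ ⋃ x ∈ s, ball x δ) :
    ∃ s : Finset X, s.card ≤ m * t.card ∧ E ⊆ ⋃ x ∈ s, ball x δ := by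
  classical
  choose u hu_card hu_cov using hcov
  refine ⟨t.biUnion u, ?_, fun x hx => ?_⟩
  · calc (t.biUnion u).card ≤ ∑ ξ ∈ t, (u ξ).card := Finset.card_biUnion_le
      _ ≤ ∑ _ξ ∈ t, m := Finset.sum_le_sum fun ξ _ => hu_card ξ
      _ = m * t.card := by rw [Finset.sum_const, smul_eq_mul, mul_comm]
  · obtain ⟨ξ, hξ, hpx⟩ := mem_iUnion₂.mp (ht (mem_image_of_mem p hx))
    obtain ⟨y, hy, hxy⟩ := mem_iUnion₂.mp (hu_cov ξ ⟨hpx, hx⟩)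
    exact mem_iUnion₂.mpr ⟨y, Finset.mem_biUnion.mpr ⟨ξ, hξ, hy⟩, hxy⟩

lemma one_le_coveringNumber_le_mul {p : X → Y} {m : ℕ} (hE : E.Nonempty)
    (hfin : ∃ t : Finset Y, p '' E ⊆ ⋃ ξ ∈ t, ball ξ δ)
    (hcov : ∀ ξ, ∃ s : Finset X, s.card ≤ m ∧ p ⁻¹' ball ξ δ ∩ E ⊆ ⋃ x ∈ s, ball x δ) :
    1 ≤ coveringNumber E δ ∧ coveringNumber E δ ≤ m * coveringNumber (p '' E) δ := by
  obtain ⟨t, ht_card, ht⟩ := exists_finset_card_eq_coveringNumber hfin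
  obtain ⟨s, hs_card, hs⟩ := exists_cover_card_le_mul ht hcov
  exact ⟨one_le_coveringNumber hE ⟨s, hs⟩, ht_card ▸ (coveringNumber_le_card hs).trans hs_card⟩

end CoveringNumber

section EuclideanGrid

variable {ι : Type*} [Fintype ι]

lemma EuclideanSpace.dist_floor_lattice_le {h : ℝ} (hh : 0 < h) (x : EuclideanSpace ℝ ι) :
    dist x (WithLp.toLp 2 fun i => h * ⌊x i / h⌋) ≤ √(Fintype.card ι) * h := by
  have hcoord (i : ι) : dist (x i) (h * ⌊x i / h⌋) ≤ h := by
    have : x i - h * ⌊x i / h⌋ = h * Int.fract (x i / h) := by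
      rw [Int.fract, mul_sub, mul_div_cancel₀ _ hh.ne']
    rw [Real.dist_eq, this, abs_of_nonneg (mul_nonneg hh.le (Int.fract_nonneg _))]
    exact mul_le_of_le_one_right hh.le (Int.fract_lt_one _).le
  rw [EuclideanSpace.dist_eq]
  calc √(∑ i, dist (x i) ((WithLp.toLp 2 fun i => h * ⌊x i / h⌋ : EuclideanSpace ℝ ι) i) ^ 2)
      ≤ √(∑ _i : ι, h ^ 2) :=
        Real.sqrt_le_sqrt <| Finset.sum_le_sum fun i _ => pow_le_pow_left₀ dist_nonneg (hcoord i) 2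
    _ = √(Fintype.card ι) * h := by
      rw [Finset.sum_const, Finset.card_univ, nsmul_eq_mul, Real.sqrt_mul (Nat.cast_nonneg _),
        Real.sqrt_sq hh.le]

lemma card_Icc_neg_const_const [DecidableEq ι] {K : ℤ} (hK : 0 ≤ K) :
    ((Finset.Icc (fun _ : ι => -K) (fun _ => K)).card : ℝ) = (2 * K + 1) ^ Fintype.card ι := by
  rw [Pi.card_Icc, Finset.prod_const, Int.card_Icc, Finset.card_univ, Nat.cast_pow]
  have : ((K + 1 - -K).toNat : ℤ) = 2 * K + 1 := by omega
  exact_mod_cast congrArg (· ^ Fintype.card ι) this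

lemma EuclideanSpace.exists_cover_card_le_of_isBounded {S : Set (EuclideanSpace ℝ ι)}
    (hS : IsBounded S) :
    ∃ C > 0, ∀ δ ∈ Ioo (0 : ℝ) 1, ∃ s : Finset (EuclideanSpace ℝ ι),
      (s.card : ℝ) ≤ C * δ ^ (-(Fintype.card ι : ℝ)) ∧ S ⊆ ⋃ x ∈ s, ball x δ := by
  classical
  obtain ⟨R, hR⟩ := hS.subset_closedBall 0
  set c := √(Fintype.card ι) + 1
  refine ⟨(2 * |R| * c + 3) ^ Fintype.card ι, by positivity, fun δ ⟨hδ0, hδ1⟩ => ?_⟩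
  set h := δ / c
  have hh : 0 < h := by positivity
  set K : ℤ := ⌈|R| / h⌉
  have hK : 0 ≤ K := Int.ceil_nonneg (by positivity)
  refine ⟨(Finset.Icc (fun _ : ι => -K) (fun _ => K)).image
      fun k => WithLp.toLp 2 fun i => h * k i, ?_, fun x hx => ?_⟩
  · have hK_lt : (K : ℝ) * δ < |R| * c + δ := by
      have hRh : |R| / h * δ = |R| * c := by rw [div_div_eq_mul_div, div_mul_cancel₀ _ hδ0.ne']
      nlinarith [mul_lt_mul_of_pos_right (Int.ceil_lt_add_one (|R| / h)) hδ0]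
    have h2K : (2 * K + 1 : ℝ) ≤ (2 * |R| * c + 3) / δ := by
      rw [le_div_iff₀ hδ0]
      linarith
    calc ((Finset.image _ _).card : ℝ)
        ≤ (Finset.Icc (fun _ : ι => -K) (fun _ => K)).card := by exact_mod_cast Finset.card_image_le
      _ = (2 * K + 1) ^ Fintype.card ι := card_Icc_neg_const_const hK
      _ ≤ ((2 * |R| * c + 3) / δ) ^ Fintype.card ι := by gcongr
      _ = (2 * |R| * c + 3) ^ Fintype.card ι * δ ^ (-(Fintype.card ι : ℝ)) := by
        rw [div_pow, Real.rpow_neg hδ0.le, Real.rpow_natCast, div_eq_mul_inv]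
  · have hxR (i : ι) : |x i| ≤ |R| :=
      (PiLp.norm_apply_le x i).trans ((mem_closedBall_zero_iff.mp (hR hx)).trans (le_abs_self R))
    have hk : (fun i => ⌊x i / h⌋) ∈ Finset.Icc (fun _ : ι => -K) (fun _ => K) := by
      refine Finset.mem_Icc.mpr ⟨fun i => ?_, fun i => ?_⟩
      · rw [← Int.floor_neg, ← neg_div]
        exact Int.floor_le_floor (div_le_div_of_nonneg_right (neg_le_of_abs_le (hxR i)) hh.le)
      · exact (Int.floor_le_floor (div_le_div_of_nonneg_right (le_of_abs_le (hxR i)) hh.le)).trans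
          (Int.floor_le_ceil _)
    refine mem_iUnion₂.mpr ⟨_, Finset.mem_image_of_mem _ hk, mem_ball.mpr ?_⟩
    calc _ ≤ √(Fintype.card ι) * h := EuclideanSpace.dist_floor_lattice_le hh x
      _ < c * h := by gcongr; exact lt_add_one _
      _ = δ := mul_div_cancel₀ δ (by positivity)

end EuclideanGrid

lemma limsup_le_limsup_of_le_add {α : Type*} {l : Filter α} {f g h : α → ℝ}
    (hf : IsCoboundedUnder (· ≤ ·) l f) (hg : IsBoundedUnder (· ≤ ·) l g)
    (hh : ∀ ε > 0, ∀ᶠ x in l, h x ≤ ε) (hfgh : ∀ᶠ x in l, f x ≤ h x + g x) :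
    limsup f l ≤ limsup g l := by
  refine le_of_forall_pos_le_add fun ε hε => limsup_le_of_le hf ?_
  filter_upwards [hfgh, hh (ε / 2) (half_pos hε),
    eventually_lt_of_limsup_lt (lt_add_of_pos_right _ (half_pos hε)) hg] with x h1 h2 h3
  linarith

lemma eventually_mem_Ioo_zero_one : ∀ᶠ δ in 𝓝[>] (0 : ℝ), δ ∈ Ioo 0 1 :=
  Ioo_mem_nhdsGT one_pos

lemma tendsto_neg_log_nhdsGT_zero : Tendsto (fun δ => -Real.log δ) (𝓝[>] 0) atTop :=
  tendsto_neg_atBot_atTop.comp Real.tendsto_log_nhdsGT_zero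

lemma eventually_log_div_neg_log_le {N : ℝ → ℝ} {C b η : ℝ} (hC : 0 < C) (hη : 0 < η)
    (hN : ∀ δ ∈ Ioo (0 : ℝ) 1, 0 < N δ ∧ N δ ≤ C * δ ^ (-b)) :
    ∀ᶠ δ in 𝓝[>] 0, Real.log (N δ) / -Real.log δ ≤ b + η := by
  have hC_small : ∀ᶠ δ in 𝓝[>] (0 : ℝ), Real.log C / -Real.log δ ≤ η :=
    (tendsto_const_nhds.div_atTop tendsto_neg_log_nhdsGT_zero).eventually (ge_mem_nhds hη)
  filter_upwards [eventually_mem_Ioo_zero_one, hC_small] with δ hδ hCδ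
  obtain ⟨hpos, hle⟩ := hN δ hδ
  have hL : 0 < -Real.log δ := neg_pos.mpr (Real.log_neg hδ.1 hδ.2)
  have hlog : Real.log (N δ) ≤ Real.log C + b * -Real.log δ :=
    calc Real.log (N δ) ≤ Real.log (C * δ ^ (-b)) := Real.log_le_log hpos hle
      _ = Real.log C + b * -Real.log δ := by
        rw [Real.log_mul hC.ne' (Real.rpow_pos_of_pos hδ.1 _).ne', Real.log_rpow hδ.1]; ring
  calc Real.log (N δ) / -Real.log δ ≤ (Real.log C + b * -Real.log δ) / -Real.log δ := by gcongr
    _ = Real.log C / -Real.log δ + b := by rw [add_div, mul_div_cancel_right₀ _ hL.ne']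
    _ ≤ b + η := by linarith

lemma Real.log_natCast_le_add_of_le_mul {a b c : ℕ} (ha : 1 ≤ a) (h : a ≤ b * c) :
    Real.log a ≤ Real.log b + Real.log c := by
  obtain ⟨hb, hc⟩ := Nat.mul_ne_zero_iff.mp (by omega : b * c ≠ 0)
  rw [← Real.log_mul (by exact_mod_cast hb) (by exact_mod_cast hc)]
  exact Real.log_le_log (by exact_mod_cast ha) (by exact_mod_cast h)

lemma limsup_log_div_neg_log_le_of_le_mul {f g m : ℝ → ℕ} {C b : ℝ} (hC : 0 < C)
    (hm : ∀ ε > (0 : ℝ), ∃ Cε > (0 : ℝ), ∀ δ ∈ Ioo (0 : ℝ) 1, (m δ : ℝ) ≤ Cε * δ ^ (-ε))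
    (hfg : ∀ δ ∈ Ioo (0 : ℝ) 1, 1 ≤ f δ ∧ f δ ≤ m δ * g δ)
    (hg : ∀ δ ∈ Ioo (0 : ℝ) 1, 1 ≤ g δ ∧ (g δ : ℝ) ≤ C * δ ^ (-b)) :
    limsup (fun δ => Real.log (f δ) / -Real.log δ) (𝓝[>] 0) ≤
      limsup (fun δ => Real.log (g δ) / -Real.log δ) (𝓝[>] 0) := by
  have hL : ∀ᶠ δ in 𝓝[>] (0 : ℝ), 0 ≤ -Real.log δ := by
    filter_upwards [eventually_mem_Ioo_zero_one] with δ hδ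
    exact neg_nonneg.mpr (Real.log_nonpos hδ.1.le hδ.2.le)
  refine limsup_le_limsup_of_le_add (h := fun δ => Real.log (m δ) / -Real.log δ) ?_ ?_ ?_ ?_
  · refine isCoboundedUnder_le_of_eventually_le _ (x := 0) ?_
    filter_upwards [hL] with δ hδ
    exact div_nonneg (Real.log_natCast_nonneg _) hδ
  · exact isBoundedUnder_of_eventually_le <| eventually_log_div_neg_log_le hC one_pos
      fun δ hδ => ⟨by exact_mod_cast (hg δ hδ).1, (hg δ hδ).2⟩
  · intro ε hε
    obtain ⟨Cε, hCε, hmε⟩ := hm (ε / 2) (half_pos hε)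
    refine (eventually_log_div_neg_log_le hCε (half_pos hε) fun δ hδ => ?_).mono
      fun δ hδ => hδ.trans_eq (add_halves ε)
    obtain ⟨hf1, hfg⟩ := hfg δ hδ
    exact ⟨by exact_mod_cast Nat.pos_of_mul_pos_right (hf1.trans hfg), hmε δ hδ⟩
  · filter_upwards [eventually_mem_Ioo_zero_one, hL] with δ hδ hLδ
    rw [← add_div]
    exact div_le_div_of_nonneg_right
      (Real.log_natCast_le_add_of_le_mul (hfg δ hδ).1 (hfg δ hδ).2) hLδ

theorem stmt3_general {d n : ℕ} (E : Set (EuclideanSpace ℝ (Fin d)))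
    (p : EuclideanSpace ℝ (Fin d) → EuclideanSpace ℝ (Fin n))
    (hpE : IsBounded (p '' E)) (M : ℝ → ℕ)
    (hM : ∀ ε > (0:ℝ), ∃ Cε > (0:ℝ), ∀ δ ∈ Set.Ioo (0:ℝ) 1, (M δ : ℝ) ≤ Cε * δ ^ (-ε))
    (hcov : ∀ δ ∈ Set.Ioo (0:ℝ) 1, ∀ ξ : EuclideanSpace ℝ (Fin n),
      ∃ s : Finset (EuclideanSpace ℝ (Fin d)), s.card ≤ M δ ∧
        p ⁻¹' Metric.ball ξ δ ∩ E ⊆ ⋃ x ∈ s, Metric.ball x δ) :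
    ubdim E ≤ ubdim (p '' E) := by
  rcases E.eq_empty_or_nonempty with rfl | hne
  · simp only [image_empty, ubdim_empty, le_refl]
  obtain ⟨C, hC, hgrid⟩ := EuclideanSpace.exists_cover_card_le_of_isBounded hpE
  refine limsup_log_div_neg_log_le_of_le_mul (b := Fintype.card (Fin n)) hC hM
    (fun δ hδ => ?_) (fun δ hδ => ?_)
  · obtain ⟨t, -, ht⟩ := hgrid δ hδ
    exact one_le_coveringNumber_le_mul hne ⟨t, ht⟩ (hcov δ hδ)
  · obtain ⟨t, ht_card, ht⟩ := hgrid δ hδ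
    exact ⟨one_le_coveringNumber (hne.image p) ⟨t, ht⟩,
      (Nat.cast_le.mpr (coveringNumber_le_card ht)).trans ht_card⟩

theorem stmt3 {d n : ℕ} (E : Set (EuclideanSpace ℝ (Fin d))) (hE : IsBounded E)
    (p : EuclideanSpace ℝ (Fin d) → EuclideanSpace ℝ (Fin n))
    (hpE : IsBounded (p '' E)) (M : ℝ → ℕ)
    (hM : ∀ ε > (0:ℝ), ∃ Cε > (0:ℝ), ∀ δ ∈ Set.Ioo (0:ℝ) 1, (M δ : ℝ) ≤ Cε * δ ^ (-ε))
    (hcov : ∀ δ ∈ Set.Ioo (0:ℝ) 1, ∀ ξ : EuclideanSpace ℝ (Fin n),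
      ∃ s : Finset (EuclideanSpace ℝ (Fin d)), s.card ≤ M δ ∧
        p ⁻¹' Metric.ball ξ δ ∩ E ⊆ ⋃ x ∈ s, Metric.ball x δ) :
    ubdim E ≤ ubdim (p '' E) :=
  stmt3_general E p hpE M hM hcov
end

section
/- Let X = (ℝ^d, ‖·‖_*) be a normed space whose norm is differentiable at z ≠ 0, with gradient ∇‖z‖_* taken with respect to the Euclidean structure. Then ⟨z, ∇‖z‖_*⟩ = ‖z‖_*, and there exists η = η(d, ‖·‖_*) ∈ (0,1) such that z lies in the cone X(0, span(∇‖z‖_*), η) = {x : ‖P_{W^⊥} x‖ < η‖x‖} where W = span(∇‖z‖_*). -/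
/-!
The Euclidean gradient `g` of a norm `ν` at `z ≠ 0` satisfies Euler's relation `⟪z, g⟫ = ν z`,
since `ν` is positively homogeneous of degree one. In finite dimension `ν` is equivalent to the
Euclidean norm, `c ‖x‖ ≤ ν x ≤ C ‖x‖`, and the upper bound makes `ν` `C`-Lipschitz, so `‖g‖ ≤ C`.
Hence the projection of `z` onto `ℝ g` has length `ν z / ‖g‖ ≥ (c / C) ‖z‖`, and by Pythagoras the
component of `z` orthogonal to `g` is at most `√(1 - (c / C)²) ‖z‖`, uniformly in `z`.
-/

open Filter Set Metric Bornology

/-- `ν` is a norm on `ℝ^d`. -/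
structure IsNorm {d : ℕ} (ν : EuclideanSpace ℝ (Fin d) → ℝ) : Prop where
  eq_zero_iff : ∀ x, ν x = 0 ↔ x = 0
  smul_eq : ∀ (c : ℝ) (x), ν (c • x) = |c| * ν x
  add_le : ∀ x y, ν (x + y) ≤ ν x + ν y

theorem HasFDerivAt.apply_self_eq_of_posHomogeneous {E : Type*} [NormedAddCommGroup E]
    [NormedSpace ℝ E] {f : E → ℝ} {f' : E →L[ℝ] ℝ} {z : E} (hf : HasFDerivAt f f' z)
    (hhom : ∀ t : ℝ, 0 < t → f (t • z) = t * f z) : f' z = f z := by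
  have hray : HasDerivAt (fun t : ℝ => f (t • z)) (f' z) 1 := by
    refine HasFDerivAt.comp_hasDerivAt (f := fun t : ℝ => t • z) 1 (by simpa using hf) ?_
    simpa using (hasDerivAt_id (1 : ℝ)).smul_const z
  have hlin : HasDerivAt (fun t : ℝ => f (t • z)) (f z) 1 := by
    refine ((hasDerivAt_id (1 : ℝ)).mul_const (f z)).congr_of_eventuallyEq ?_
      |>.congr_deriv (one_mul _)
    filter_upwards [eventually_gt_nhds one_pos] with t ht using hhom t ht
  exact hray.unique hlin

section Projection

variable {𝕜 E : Type*} [RCLike 𝕜] [NormedAddCommGroup E] [InnerProductSpace 𝕜 E]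

theorem Submodule.norm_orthogonalProjectionOnto_span_singleton (v w : E) :
    ‖(𝕜 ∙ v).orthogonalProjectionOnto w‖ = ‖(inner 𝕜 v w : 𝕜)‖ / ‖v‖ := by
  rw [← Submodule.norm_coe, ← Submodule.starProjection_apply, starProjection_singleton,
    norm_smul, norm_div, RCLike.norm_ofReal, abs_of_nonneg (sq_nonneg _)]
  rcases eq_or_ne v 0 with rfl | hv
  · simp
  · have : 0 < ‖v‖ := norm_pos_iff.mpr hv
    field_simp

theorem Submodule.norm_orthogonalProjectionOnto_orthogonal_le (K : Submodule 𝕜 E)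
    [K.HasOrthogonalProjection] {κ : ℝ} (hκ : 0 ≤ κ) {z : E}
    (hz : κ * ‖z‖ ≤ ‖K.orthogonalProjectionOnto z‖) :
    ‖Kᗮ.orthogonalProjectionOnto z‖ ≤ √(1 - κ ^ 2) * ‖z‖ := by
  have hpyth := K.norm_sq_eq_add_norm_sq_projection z
  rw [← Real.sqrt_sq (norm_nonneg z), ← Real.sqrt_mul' _ (sq_nonneg _)]
  refine Real.le_sqrt_of_sq_le ?_
  nlinarith [mul_nonneg hκ (norm_nonneg z)]

/-- Any aperture strictly between the sharp one `√(1 - κ²)` and `1` works; take the midpoint. -/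
noncomputable def coneAperture (κ : ℝ) : ℝ := (1 + √(1 - κ ^ 2)) / 2

theorem sqrt_one_sub_sq_lt_one {κ : ℝ} (hκ : 0 < κ) : √(1 - κ ^ 2) < 1 :=
  (Real.sqrt_lt' one_pos).mpr (by nlinarith)

theorem coneAperture_mem_Ioo {κ : ℝ} (hκ : 0 < κ) : coneAperture κ ∈ Ioo 0 1 := by
  have := sqrt_one_sub_sq_lt_one hκ
  constructor <;> unfold coneAperture <;> linarith [Real.sqrt_nonneg (1 - κ ^ 2)]

theorem Submodule.norm_orthogonalProjectionOnto_orthogonal_lt (K : Submodule 𝕜 E)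
    [K.HasOrthogonalProjection] {κ : ℝ} (hκ : 0 < κ) {z : E} (hz₀ : z ≠ 0)
    (hz : κ * ‖z‖ ≤ ‖K.orthogonalProjectionOnto z‖) :
    ‖Kᗮ.orthogonalProjectionOnto z‖ < coneAperture κ * ‖z‖ := by
  refine (K.norm_orthogonalProjectionOnto_orthogonal_le hκ.le hz).trans_lt ?_
  gcongr
  · have := sqrt_one_sub_sq_lt_one hκ
    unfold coneAperture
    linarith

end Projection

section Seminorm

variable {E : Type*} [NormedAddCommGroup E] [NormedSpace ℝ E] (p : Seminorm ℝ E)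

theorem Seminorm.lipschitzWith_of_le_mul_norm {C : ℝ} (hC₀ : 0 ≤ C)
    (hC : ∀ x, p x ≤ C * ‖x‖) : LipschitzWith (Real.toNNReal C) p :=
  LipschitzWith.of_dist_le_mul fun x y => by
    rw [Real.coe_toNNReal C hC₀, Real.dist_eq, dist_eq_norm]
    exact (p.norm_sub_map_le_sub x y).trans (hC _)

theorem Seminorm.norm_le_of_hasFDerivAt {C : ℝ} (hC₀ : 0 ≤ C) (hC : ∀ x, p x ≤ C * ‖x‖)
    {f' : E →L[ℝ] ℝ} {z : E} (hf : HasFDerivAt p f' z) : ‖f'‖ ≤ C := by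
  simpa [hC₀] using hf.le_of_lipschitz (p.lipschitzWith_of_le_mul_norm hC₀ hC)

variable [FiniteDimensional ℝ E]

theorem Seminorm.continuous_of_finiteDimensional : Continuous p :=
  continuousOn_univ.mp (p.convexOn.continuousOn isOpen_univ)

theorem Seminorm.exists_mul_norm_le_of_finiteDimensional (hp : ∀ x, p x = 0 → x = 0) :
    ∃ c, 0 < c ∧ ∀ x, c * ‖x‖ ≤ p x := by
  cases subsingleton_or_nontrivial E
  · exact ⟨1, one_pos, fun x => by simp [Subsingleton.elim x 0]⟩
  obtain ⟨x₀, hx₀, hmin⟩ := (isCompact_sphere (0 : E) 1).exists_isMinOn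
    (NormedSpace.sphere_nonempty.mpr zero_le_one) p.continuous_of_finiteDimensional.continuousOn
  have hx₀ne : x₀ ≠ 0 := ne_zero_of_mem_unit_sphere ⟨x₀, hx₀⟩
  refine ⟨p x₀, (apply_nonneg p x₀).lt_of_ne fun h => hx₀ne (hp x₀ h.symm), fun x => ?_⟩
  rcases eq_or_ne x 0 with rfl | hx
  · simp
  have hxn : 0 < ‖x‖ := norm_pos_iff.mpr hx
  have hunit : ‖x‖⁻¹ • x ∈ sphere (0 : E) 1 := by simp [norm_smul, hxn.ne']
  calc p x₀ * ‖x‖ ≤ p (‖x‖⁻¹ • x) * ‖x‖ := by gcongr; exact hmin hunit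
    _ = p x := by
      rw [map_smul_eq_mul, norm_inv, norm_norm, mul_comm, ← mul_assoc, mul_inv_cancel₀ hxn.ne',
        one_mul]

end Seminorm

noncomputable def IsNorm.toSeminorm {d : ℕ} {ν : EuclideanSpace ℝ (Fin d) → ℝ} (hν : IsNorm ν) :
    Seminorm ℝ (EuclideanSpace ℝ (Fin d)) :=
  Seminorm.of ν hν.add_le fun c x => by rw [hν.smul_eq, Real.norm_eq_abs]

theorem stmt12 {d : ℕ} (ν : EuclideanSpace ℝ (Fin d) → ℝ) (hν : IsNorm ν)
    (grad : EuclideanSpace ℝ (Fin d) → EuclideanSpace ℝ (Fin d))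
    (hgrad : ∀ z, z ≠ 0 → HasGradientAt ν (grad z) z) :
    (∀ z, z ≠ 0 → (inner ℝ z (grad z) : ℝ) = ν z) ∧
    ∃ η ∈ Set.Ioo (0:ℝ) 1, ∀ z, z ≠ 0 →
      ‖(Submodule.orthogonalProjectionOnto (Submodule.span ℝ {grad z})ᗮ z : EuclideanSpace ℝ (Fin d))‖ <
        η * ‖z‖ := by
  obtain ⟨c, hc, hcν⟩ := hν.toSeminorm.exists_mul_norm_le_of_finiteDimensional
    fun x => (hν.eq_zero_iff x).mp
  obtain ⟨C, hC, hνC⟩ := hν.toSeminorm.bound_of_continuous_normedSpace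
    hν.toSeminorm.continuous_of_finiteDimensional
  have euler : ∀ z, z ≠ 0 → (inner ℝ z (grad z) : ℝ) = ν z := fun z hz => by
    rw [real_inner_comm]
    simpa using (hgrad z hz).hasFDerivAt.apply_self_eq_of_posHomogeneous fun t ht => by
      rw [hν.smul_eq, abs_of_pos ht]
  refine ⟨euler, coneAperture (c / C), coneAperture_mem_Ioo (by positivity), fun z hz => ?_⟩
  have hgrad_le : ‖grad z‖ ≤ C := by
    simpa using hν.toSeminorm.norm_le_of_hasFDerivAt hC.le hνC (hgrad z hz).hasFDerivAt
  have hνz : c * ‖z‖ ≤ ν z := hcν z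
  have hνz_pos : 0 < ν z := lt_of_lt_of_le (by positivity [norm_pos_iff.mpr hz]) hνz
  have hgrad_pos : 0 < ‖grad z‖ := norm_pos_iff.mpr fun h =>
    hνz_pos.ne (by simpa [h] using euler z hz)
  have hproj : c / C * ‖z‖ ≤ ‖(ℝ ∙ grad z).orthogonalProjectionOnto z‖ := by
    rw [Submodule.norm_orthogonalProjectionOnto_span_singleton, real_inner_comm, euler z hz,
      Real.norm_of_nonneg hνz_pos.le]
    calc c / C * ‖z‖ ≤ ν z / C := by rw [div_mul_eq_mul_div]; gcongr
      _ ≤ ν z / ‖grad z‖ := by gcongr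
  exact (ℝ ∙ grad z).norm_orthogonalProjectionOnto_orthogonal_lt (by positivity) hz hproj
end
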